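/- arXiv:2507.22366 — 3 statements merged into one kernel-verified Lean document; each statement's English description precedes it below -/
import Mathlib

section
/- Let ρ : [0,2π] → ℝ be continuous and nonnegative, n > 0, and A > 0. Suppose (i) ∫₀^{2π} ρ^n dθ = (1/(2A)) (∫₀^{2π} ρ dθ)(∫₀^{2π} ρ^{n+1} dθ), (ii) (∫₀^{2π} ρ dθ)² ≥ 4πA, and (iii) ∫₀^{2π} ρ^{n+1} dθ > 0. Then ρ is constant. -/
open Real intervalIntegral MeasureTheory Set

/-- A continuous nonnegative function on `[a,b]` that is positive somewhere has
positive integral. -/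
lemma integral_pos_of_cont {f : ℝ → ℝ} {a b c : ℝ} (hab : a < b) (hc : c ∈ Set.Icc a b)
    (hf : ContinuousOn f (Set.Icc a b)) (hnn : ∀ x ∈ Set.Icc a b, 0 ≤ f x)
    (hpos : 0 < f c) : 0 < ∫ x in a..b, f x := by
  have hfi : IntervalIntegrable f volume a b :=
    (hf.mono (by rw [Set.uIcc_of_le hab.le])).intervalIntegrable
  have hnn' : 0 ≤ᵐ[volume.restrict (Set.uIoc a b)] f := by
    refine (ae_restrict_iff' measurableSet_uIoc).mpr (Filter.Eventually.of_forall fun x hx => ?_)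
    exact hnn x (Set.uIoc_of_le hab.le ▸ hx |> fun h => ⟨h.1.le, h.2⟩)
  rw [integral_pos_iff_support_of_nonneg_ae' hnn' hfi]
  refine ⟨hab, ?_⟩
  -- find δ > 0 such that f > 0 on Icc a b ∩ ball c δ
  have := hf c hc
  rw [Metric.continuousWithinAt_iff] at this
  obtain ⟨δ, hδ, hball⟩ := this (f c) hpos
  set s := max a (c - δ/2)
  set t := min b (c + δ/2)
  obtain ⟨hc1, hc2⟩ := hc
  have hst : s < t := by
    simp only [s, t, max_lt_iff, lt_min_iff]
    exact ⟨⟨hab, by linarith⟩, by linarith, by linarith⟩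
  have hsub : Set.Ioo s t ⊆ Function.support f ∩ Set.Ioc a b := by
    intro x hx
    have hx1 : x ∈ Set.Icc a b := ⟨(le_max_left a _).trans hx.1.le, hx.2.le.trans (min_le_left _ _)⟩
    have hd : dist x c < δ := by
      rw [Real.dist_eq, abs_lt]
      constructor
      · have := hx.1; have := le_max_right a (c - δ/2); nlinarith [lt_of_le_of_lt (le_max_right a (c - δ/2)) hx.1]
      · have := lt_of_lt_of_le hx.2 (min_le_right b (c + δ/2)); linarith
    have := hball hx1 hd
    rw [Real.dist_eq, abs_lt] at this
    refine ⟨?_, lt_of_le_of_lt (le_max_left a _) hx.1, hx.2.le.trans (min_le_left _ _)⟩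
    intro h0; rw [h0] at this; linarith [this.1]
  calc (0:ENNReal) < volume (Set.Ioo s t) := by rw [Real.volume_Ioo]; exact ENNReal.ofReal_pos.mpr (by linarith) |>.trans_le le_rfl
    _ ≤ _ := measure_mono hsub

/-- If a continuous nonnegative function on `[a,b]` has nonpositive integral,
it vanishes on `[a,b]`. -/
lemma eq_zero_of_integral_nonpos {f : ℝ → ℝ} {a b : ℝ} (hab : a < b)
    (hf : ContinuousOn f (Set.Icc a b)) (hnn : ∀ x ∈ Set.Icc a b, 0 ≤ f x)
    (hint : (∫ x in a..b, f x) ≤ 0) : ∀ c ∈ Set.Icc a b, f c = 0 := by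
  intro c hc
  by_contra h0
  have hpos : 0 < f c := lt_of_le_of_ne (hnn c hc) (Ne.symm h0)
  exact absurd hint (not_le.mpr (integral_pos_of_cont hab hc hf hnn hpos))

theorem rigidity_constant
    (ρ : ℝ → ℝ) (hρc : ContinuousOn ρ (Set.Icc 0 (2 * π)))
    (hρnn : ∀ θ ∈ Set.Icc 0 (2 * π), 0 ≤ ρ θ)
    (n A : ℝ) (hn : 0 < n) (hA : 0 < A)
    (h1 : (∫ θ in (0:ℝ)..(2 * π), (ρ θ) ^ n) =
      (1 / (2 * A)) * (∫ θ in (0:ℝ)..(2 * π), ρ θ) *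
        (∫ θ in (0:ℝ)..(2 * π), (ρ θ) ^ (n + 1)))
    (h2 : (∫ θ in (0:ℝ)..(2 * π), ρ θ) ^ 2 ≥ 4 * π * A)
    (h3 : 0 < ∫ θ in (0:ℝ)..(2 * π), (ρ θ) ^ (n + 1)) :
    ∀ x ∈ Set.Icc (0:ℝ) (2 * π), ∀ y ∈ Set.Icc (0:ℝ) (2 * π), ρ x = ρ y := by
  have hπ : (0:ℝ) < 2 * π := by positivity
  have huIcc : Set.uIcc (0:ℝ) (2 * π) = Set.Icc 0 (2 * π) := Set.uIcc_of_le hπ.le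
  set L := ∫ θ in (0:ℝ)..(2 * π), ρ θ with hL
  set M := ∫ θ in (0:ℝ)..(2 * π), (ρ θ) ^ n with hM
  set I := ∫ θ in (0:ℝ)..(2 * π), (ρ θ) ^ (n + 1) with hI
  -- continuity facts
  have cρn : ContinuousOn (fun θ => (ρ θ) ^ n) (Set.Icc 0 (2 * π)) :=
    hρc.rpow_const (fun x _ => Or.inr hn.le)
  have cmul : ContinuousOn (fun θ => ρ θ * (ρ θ) ^ n) (Set.Icc 0 (2 * π)) := hρc.mul cρn
  have iρ : IntervalIntegrable ρ volume 0 (2 * π) :=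
    (hρc.mono huIcc.subset).intervalIntegrable
  have iρn : IntervalIntegrable (fun θ => (ρ θ) ^ n) volume 0 (2 * π) :=
    (cρn.mono huIcc.subset).intervalIntegrable
  have imul : IntervalIntegrable (fun θ => ρ θ * (ρ θ) ^ n) volume 0 (2 * π) :=
    (cmul.mono huIcc.subset).intervalIntegrable
  -- ρ^(n+1) = ρ * ρ^n on the interval
  have hpow : ∀ θ ∈ Set.Icc (0:ℝ) (2 * π), (ρ θ) ^ (n + 1) = ρ θ * (ρ θ) ^ n := by
    intro θ hθ
    rw [Real.rpow_add' (hρnn θ hθ) (by linarith), Real.rpow_one, mul_comm]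
  have hII : (∫ θ in (0:ℝ)..(2 * π), ρ θ * (ρ θ) ^ n) = I := by
    rw [hI]
    exact intervalIntegral.integral_congr (fun θ hθ => (hpow θ (huIcc ▸ hθ)).symm)
  -- the key auxiliary function
  set g : ℝ → ℝ := fun x => 2 * π * (ρ x * (ρ x) ^ n) - ρ x * M - (ρ x) ^ n * L + I with hgdef
  have hg : ∀ x, g x = ∫ y in (0:ℝ)..(2 * π), (ρ x - ρ y) * ((ρ x) ^ n - (ρ y) ^ n) := by
    intro x
    have heq : (fun y => (ρ x - ρ y) * ((ρ x) ^ n - (ρ y) ^ n)) =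
        fun y => (ρ x * (ρ x) ^ n - ((ρ x) ^ n * ρ y + ρ x * (ρ y) ^ n)) + ρ y * (ρ y) ^ n := by
      funext y; ring
    rw [heq, intervalIntegral.integral_add (((_root_.intervalIntegrable_const).sub
        ((iρ.const_mul _).add (iρn.const_mul _)))) imul,
      intervalIntegral.integral_sub _root_.intervalIntegrable_const ((iρ.const_mul _).add (iρn.const_mul _)),
      intervalIntegral.integral_add (iρ.const_mul _) (iρn.const_mul _),
      intervalIntegral.integral_const, hII, hgdef]
    simp only [intervalIntegral.integral_const_mul]
    simp only [smul_eq_mul, sub_zero, ← hL, ← hM]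
    ring
  -- g is nonneg on the interval
  have hFnn : ∀ x ∈ Set.Icc (0:ℝ) (2 * π), ∀ y ∈ Set.Icc (0:ℝ) (2 * π),
      0 ≤ (ρ x - ρ y) * ((ρ x) ^ n - (ρ y) ^ n) := by
    intro x hx y hy
    rcases le_total (ρ x) (ρ y) with h | h
    · have : (ρ x) ^ n ≤ (ρ y) ^ n := Real.rpow_le_rpow (hρnn x hx) h hn.le
      have := mul_nonneg (by linarith : (0:ℝ) ≤ ρ y - ρ x) (by linarith : (0:ℝ) ≤ (ρ y) ^ n - (ρ x) ^ n)
      nlinarith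
    · have : (ρ y) ^ n ≤ (ρ x) ^ n := Real.rpow_le_rpow (hρnn y hy) h hn.le
      exact mul_nonneg (by linarith) (by linarith)
  have hgnn : ∀ x ∈ Set.Icc (0:ℝ) (2 * π), 0 ≤ g x := by
    intro x hx
    rw [hg x]
    exact intervalIntegral.integral_nonneg hπ.le (fun y hy => hFnn x hx y hy)
  -- ∫ g = 4π I - 2 L M
  have hintg : (∫ x in (0:ℝ)..(2 * π), g x) = 4 * π * I - 2 * L * M := by
    rw [hgdef]
    simp only
    rw [intervalIntegral.integral_add ((((imul.const_mul _)).sub (iρ.mul_const _)).sub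
        (iρn.mul_const _)) _root_.intervalIntegrable_const,
      intervalIntegral.integral_sub ((imul.const_mul _).sub (iρ.mul_const _)) (iρn.mul_const _),
      intervalIntegral.integral_sub (imul.const_mul _) (iρ.mul_const _),
      intervalIntegral.integral_const]
    simp only [intervalIntegral.integral_const_mul, intervalIntegral.integral_mul_const]
    rw [hII]
    simp only [smul_eq_mul, ← hL, ← hM, ← hI]
    ring
  -- ∫ g ≤ 0 from the hypotheses
  have hle : (∫ x in (0:ℝ)..(2 * π), g x) ≤ 0 := by
    rw [hintg]
    have hAM : 2 * A * M = L * I := by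
      rw [h1]; field_simp
    have key : 2 * L * M * A = L ^ 2 * I := by linear_combination L * hAM
    have h4 : 4 * π * I * A ≤ 2 * L * M * A := by
      calc 4 * π * I * A = (4 * π * A) * I := by ring
        _ ≤ L ^ 2 * I := mul_le_mul_of_nonneg_right h2 h3.le
        _ = 2 * L * M * A := key.symm
    nlinarith [hA, h4]
  -- g continuous
  have hgc : ContinuousOn g (Set.Icc 0 (2 * π)) := by
    exact (((cmul.const_smul (2 * π)).sub (hρc.mul continuousOn_const)).sub
      (cρn.mul continuousOn_const)).add continuousOn_const
  -- g vanishes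
  have hg0 : ∀ x ∈ Set.Icc (0:ℝ) (2 * π), g x = 0 :=
    eq_zero_of_integral_nonpos hπ hgc hgnn hle
  -- now conclude pointwise
  intro x hx y hy
  by_contra hne
  have hF0 : ∀ z ∈ Set.Icc (0:ℝ) (2 * π), (ρ x - ρ z) * ((ρ x) ^ n - (ρ z) ^ n) = 0 := by
    have hcF : ContinuousOn (fun z => (ρ x - ρ z) * ((ρ x) ^ n - (ρ z) ^ n))
        (Set.Icc 0 (2 * π)) :=
      ((continuousOn_const.sub hρc).mul (continuousOn_const.sub cρn))
    refine eq_zero_of_integral_nonpos hπ hcF (fun z hz => hFnn x hx z hz) ?_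
    rw [← hg x]; exact le_of_eq (hg0 x hx)
  have := hF0 y hy
  rcases lt_or_gt_of_ne hne with h | h
  · have hlt : (ρ x) ^ n < (ρ y) ^ n := Real.rpow_lt_rpow (hρnn x hx) h hn
    nlinarith
  · have hlt : (ρ y) ^ n < (ρ x) ^ n := Real.rpow_lt_rpow (hρnn y hy) h hn
    nlinarith
end

section
/- Let κ : [0,2π] → ℝ be continuous and strictly positive with ∫₀^{2π} κ(θ)^{-1} dθ = L, and let A > 0 satisfy L² ≥ 4πA. Then for any n > 0, ∫₀^{2π} κ(θ)^{-(n+1)} dθ ≥ 2π (A/π)^{(n+1)/2}. -/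
/-!
With `f = κ⁻¹` we have `L = ∫ f`, so `L / 2π` is the mean of `f` over `[0, 2π]`. Jensen's
inequality for the convex map `t ↦ t ^ (n + 1)` bounds `(L / 2π) ^ (n + 1)` by the mean of
`κ ^ (-(n + 1))`, while the isoperimetric inequality `L² ≥ 4πA` says `√(A / π) ≤ L / 2π`.
-/

open Real intervalIntegral MeasureTheory Set

theorem rpow_average_le_average_rpow {α : Type*} [MeasurableSpace α] {μ : Measure α}
    [IsFiniteMeasure μ] {f : α → ℝ} {p : ℝ} (hp : 1 ≤ p) (hf₀ : ∀ᵐ x ∂μ, 0 ≤ f x)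
    (hf : Integrable f μ) (hfp : Integrable (fun x ↦ f x ^ p) μ) :
    (⨍ x, f x ∂μ) ^ p ≤ ⨍ x, f x ^ p ∂μ := by
  rcases eq_zero_or_neZero μ with rfl | _
  · simp [zero_rpow (by linarith : p ≠ 0)]
  exact (convexOn_rpow hp).map_average_le (continuous_rpow_const (by linarith)).continuousOn
    isClosed_Ici hf₀ hf hfp

theorem rpow_interval_average_le_interval_average_rpow {f : ℝ → ℝ} {a b p : ℝ} (hp : 1 ≤ p)
    (hf : ContinuousOn f (uIcc a b)) (hf₀ : ∀ x ∈ uIcc a b, 0 ≤ f x) :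
    (⨍ x in a..b, f x) ^ p ≤ ⨍ x in a..b, f x ^ p := by
  have hfp : ContinuousOn (fun x ↦ f x ^ p) (uIcc a b) :=
    hf.rpow_const fun _ _ ↦ Or.inr (by linarith)
  have : IsFiniteMeasure (volume.restrict (uIoc a b)) := isFiniteMeasure_restrict_Ioc _ _
  refine rpow_average_le_average_rpow hp ?_ (hf.integrableOn_uIcc.mono_set uIoc_subset_uIcc)
    (hfp.integrableOn_uIcc.mono_set uIoc_subset_uIcc)
  exact ae_restrict_of_forall_mem measurableSet_uIoc fun x hx ↦ hf₀ x (uIoc_subset_uIcc hx)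

theorem rpow_div_two_le_rpow_of_le_sq {x y q : ℝ} (hx : 0 ≤ x) (hy : 0 ≤ y) (hxy : x ≤ y ^ 2)
    (hq : 0 ≤ q) : x ^ (q / 2) ≤ y ^ q := by
  rw [div_eq_mul_one_div, mul_comm, rpow_mul hx, ← sqrt_eq_rpow]
  exact rpow_le_rpow (sqrt_nonneg x) ((sqrt_le_left hy).2 hxy) hq

theorem curvature_integral_inequality
    (κ : ℝ → ℝ) (hκc : ContinuousOn κ (Set.Icc 0 (2 * π)))
    (hκpos : ∀ θ ∈ Set.Icc 0 (2 * π), 0 < κ θ)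
    (L A : ℝ) (hA : 0 < A)
    (hLdef : L = ∫ θ in (0:ℝ)..(2 * π), (κ θ) ^ (-(1:ℝ)))
    (hiso : L ^ 2 ≥ 4 * π * A)
    (n : ℝ) (hn : 0 < n) :
    (∫ θ in (0:ℝ)..(2 * π), (κ θ) ^ (-(n + 1))) ≥ 2 * π * (A / π) ^ ((n + 1) / 2) := by
  have hπ := pi_pos
  have hI : uIcc 0 (2 * π) = Icc 0 (2 * π) := uIcc_of_le (by positivity)
  have hκinv : ContinuousOn (fun θ ↦ κ θ ^ (-1:ℝ)) (Icc 0 (2 * π)) :=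
    hκc.rpow_const fun θ hθ ↦ Or.inl (hκpos θ hθ).ne'
  have hκinv₀ : ∀ θ ∈ Icc 0 (2 * π), 0 ≤ κ θ ^ (-1:ℝ) :=
    fun θ hθ ↦ (rpow_pos_of_pos (hκpos θ hθ) _).le
  have hL₀ : 0 ≤ L := hLdef ▸ integral_nonneg (by positivity) hκinv₀
  have hLavg : ⨍ θ in (0:ℝ)..(2 * π), κ θ ^ (-1:ℝ) = L / (2 * π) := by
    rw [interval_average_eq_div, hLdef, sub_zero]
  have hpow : ∫ θ in (0:ℝ)..(2 * π), κ θ ^ (-(n + 1)) =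
      ∫ θ in (0:ℝ)..(2 * π), (κ θ ^ (-1:ℝ)) ^ (n + 1) :=
    integral_congr fun θ hθ ↦ by rw [← rpow_mul (hκpos θ (hI ▸ hθ)).le, neg_one_mul]
  have hiso' : A / π ≤ (L / (2 * π)) ^ 2 := by
    rw [div_pow, le_div_iff₀ (by positivity)]
    field_simp
    nlinarith
  calc 2 * π * (A / π) ^ ((n + 1) / 2) ≤ 2 * π * (L / (2 * π)) ^ (n + 1) := by
        gcongr
        exact rpow_div_two_le_rpow_of_le_sq (by positivity) (by positivity) hiso' (by linarith)
    _ ≤ 2 * π * ⨍ θ in (0:ℝ)..(2 * π), (κ θ ^ (-1:ℝ)) ^ (n + 1) := by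
        rw [← hLavg]
        gcongr
        exact rpow_interval_average_le_interval_average_rpow (by linarith) (hI ▸ hκinv)
          (hI ▸ hκinv₀)
    _ = ∫ θ in (0:ℝ)..(2 * π), κ θ ^ (-(n + 1)) := by
        rw [interval_average_eq_div, hpow, sub_zero]
        field_simp
end

section
/- Let φ : [0,2π] → ℝ be continuously differentiable and nonnegative, let c ≥ 0, and suppose φ(θ)² + φ'(θ)² ≤ max{M², φ(θ₀)² + c} for all θ, where M = φ(θ₀) = max_θ φ(θ). Then for any η ∈ (0,1) and any θ with |θ − θ₀| < η: (1 − η)·φ(θ₀) ≤ φ(θ) + η√c. -/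
/-! The bound on `φ² + φ'²` makes `φ` Lipschitz with constant `φ(θ₀) + √c`; the mean value
theorem then keeps `φ(θ)` within `η (φ(θ₀) + √c)` of `φ(θ₀)` whenever `|θ - θ₀| < η`. -/

open Real

theorem Real.sqrt_sq_add_le_add_sqrt {a c : ℝ} (ha : 0 ≤ a) (hc : 0 ≤ c) :
    √(a ^ 2 + c) ≤ a + √c :=
  Real.sqrt_le_iff.mpr ⟨by positivity, by nlinarith [sq_sqrt hc, sqrt_nonneg c]⟩

theorem abs_le_add_sqrt_of_sq_add_sq_le {a b M c : ℝ} (hM : 0 ≤ M) (hc : 0 ≤ c)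
    (h : a ^ 2 + b ^ 2 ≤ M ^ 2 + c) : |b| ≤ M + √c :=
  (abs_le_sqrt (by nlinarith [sq_nonneg a])).trans (sqrt_sq_add_le_add_sqrt hM hc)

theorem harnack_gradient_estimate_general
    (φ : ℝ → ℝ) (hφ : ContDiff ℝ 1 φ)
    (hnn : ∀ θ ∈ Set.Icc (0:ℝ) (2 * π), 0 ≤ φ θ)
    (c : ℝ) (hc : 0 ≤ c)
    (θ₀ : ℝ) (hθ₀ : θ₀ ∈ Set.Icc (0:ℝ) (2 * π))
    (hbound : ∀ θ ∈ Set.Icc (0:ℝ) (2 * π),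
      (φ θ) ^ 2 + (deriv φ θ) ^ 2 ≤ max ((φ θ₀) ^ 2) ((φ θ₀) ^ 2 + c)) :
    ∀ η ∈ Set.Ioo (0:ℝ) 1, ∀ θ ∈ Set.Icc (0:ℝ) (2 * π), |θ - θ₀| < η →
      (1 - η) * φ θ₀ ≤ φ θ + η * Real.sqrt c := by
  intro η hη θ hθ hdist
  have hM : 0 ≤ φ θ₀ := hnn θ₀ hθ₀
  have hderiv : ∀ x ∈ Set.Icc (0:ℝ) (2 * π), ‖deriv φ x‖ ≤ φ θ₀ + √c := fun x hx =>
    abs_le_add_sqrt_of_sq_add_sq_le hM hc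
      ((hbound x hx).trans_eq (max_eq_right (le_add_of_nonneg_right hc)))
  have hlip : |φ θ₀ - φ θ| ≤ (φ θ₀ + √c) * |θ₀ - θ| :=
    (convex_Icc _ _).norm_image_sub_le_of_norm_deriv_le
      (fun x _ => hφ.differentiable one_ne_zero x) hderiv hθ hθ₀
  have hnear : (φ θ₀ + √c) * |θ₀ - θ| ≤ (φ θ₀ + √c) * η := by
    rw [abs_sub_comm]
    exact mul_le_mul_of_nonneg_left hdist.le (by positivity)
  linarith [le_abs_self (φ θ₀ - φ θ)]

theorem harnack_gradient_estimate
    (φ : ℝ → ℝ) (hφ : ContDiff ℝ 1 φ)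
    (hnn : ∀ θ ∈ Set.Icc (0:ℝ) (2 * π), 0 ≤ φ θ)
    (c : ℝ) (hc : 0 ≤ c)
    (θ₀ : ℝ) (hθ₀ : θ₀ ∈ Set.Icc (0:ℝ) (2 * π))
    (hmax : ∀ θ ∈ Set.Icc (0:ℝ) (2 * π), φ θ ≤ φ θ₀)
    (hbound : ∀ θ ∈ Set.Icc (0:ℝ) (2 * π),
      (φ θ) ^ 2 + (deriv φ θ) ^ 2 ≤ max ((φ θ₀) ^ 2) ((φ θ₀) ^ 2 + c)) :
    ∀ η ∈ Set.Ioo (0:ℝ) 1, ∀ θ ∈ Set.Icc (0:ℝ) (2 * π), |θ - θ₀| < η →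
      (1 - η) * φ θ₀ ≤ φ θ + η * Real.sqrt c :=
  harnack_gradient_estimate_general φ hφ hnn c hc θ₀ hθ₀ hbound
end
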